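/- arXiv:2311.04804 — 3 statements merged into one kernel-verified Lean document; each statement's English description precedes it below -/
import Mathlib

section
/- Let C₁, C₂, C₃, C₄ be convex subsets of ℝ³ such that for each nonempty proper index set I ⊊ {1,2,3,4}, the sets ⋃_{i∈I} C_i and ⋃_{j∉I} C_j can be strictly separated by a plane. Then no plane in ℝ³ simultaneously intersects all of C₁, C₂, C₃, C₄. -/
/-- if every nonempty proper subfamily of four convex sets in ℝ³ can be
strictly separated from its complement by a plane, then no plane meets all four sets. -/
theorem no_transversal_plane_of_separations (C : Fin 4 → Set (Fin 3 → ℝ))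
    (hconv : ∀ i, Convex ℝ (C i))
    (hsep : ∀ I : Finset (Fin 4), I.Nonempty → I ≠ Finset.univ →
      ∃ (f : (Fin 3 → ℝ) →ₗ[ℝ] ℝ) (a : ℝ), f ≠ 0 ∧
        (∀ i ∈ I, ∀ x ∈ C i, f x < a) ∧ (∀ j ∉ I, ∀ x ∈ C j, a < f x)) :
    ¬ ∃ (g : (Fin 3 → ℝ) →ₗ[ℝ] ℝ) (b : ℝ), g ≠ 0 ∧ ∀ i, ∃ x ∈ C i, g x = b := by
  rintro ⟨g, b, hg, hx⟩
  choose x hxC hxg using hx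
  -- the functional (y, t) ↦ g y - b * t on ℝ³ × ℝ
  set L : ((Fin 3 → ℝ) × ℝ) →ₗ[ℝ] ℝ :=
    g.comp (LinearMap.fst ℝ (Fin 3 → ℝ) ℝ) - b • (LinearMap.snd ℝ (Fin 3 → ℝ) ℝ) with hLdef
  have hL : L ≠ 0 := by
    intro h
    apply hg
    refine LinearMap.ext fun y => ?_
    have := congrArg (fun F => F (y, (0 : ℝ))) h
    simpa [hLdef] using this
  set v : Fin 4 → (Fin 3 → ℝ) × ℝ := fun i => (x i, 1) with hvdef
  have hLv : ∀ i, L (v i) = 0 := by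
    intro i
    simp [hLdef, hvdef, hxg i]
  -- the four vectors v i lie in the kernel of L, hence are linearly dependent
  have hdep : ¬ LinearIndependent ℝ v := by
    intro hind
    have hcard : Fintype.card (Fin 4) = Module.finrank ℝ ((Fin 3 → ℝ) × ℝ) := by simp
    let B := basisOfLinearIndependentOfCardEqFinrank hind hcard
    apply hL
    apply B.ext
    intro i
    have hBi : B i = v i := by
      simp [B, coe_basisOfLinearIndependentOfCardEqFinrank]
    rw [hBi]
    simpa using hLv i
  obtain ⟨c, hc0, i₀, hi₀⟩ := Fintype.not_linearIndependent_iff.mp hdep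
  -- the Radon-type dependence: ∑ cᵢ xᵢ = 0, ∑ cᵢ = 0
  have hsum1 : ∑ i, c i • x i = 0 := by
    have := congrArg Prod.fst hc0
    simpa [hvdef, Prod.fst_sum] using this
  have hsum2 : ∑ i, c i = 0 := by
    have := congrArg Prod.snd hc0
    simpa [hvdef, Prod.snd_sum, smul_eq_mul] using this
  set I : Finset (Fin 4) := Finset.univ.filter (fun i => 0 < c i) with hIdef
  have hIne : I.Nonempty := by
    by_contra h
    rw [Finset.not_nonempty_iff_eq_empty] at h
    have hle : ∀ i, c i ≤ 0 := by
      intro i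
      by_contra hlt
      push_neg at hlt
      have hmem : i ∈ I := by simp [hIdef, hlt]
      simp [h] at hmem
    have hneg : c i₀ < 0 := lt_of_le_of_ne (hle i₀) hi₀
    have : ∑ i, c i < ∑ i : Fin 4, (0 : ℝ) :=
      Finset.sum_lt_sum (fun i _ => hle i) ⟨i₀, Finset.mem_univ i₀, hneg⟩
    rw [hsum2] at this
    simp at this
  have hIneq : I ≠ Finset.univ := by
    intro h
    have hpos : ∀ i, 0 < c i := by
      intro i
      have : i ∈ I := h ▸ Finset.mem_univ i
      simpa [hIdef] using this
    have : ∑ i : Fin 4, (0 : ℝ) < ∑ i, c i :=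
      Finset.sum_lt_sum (fun i _ => (hpos i).le) ⟨i₀, Finset.mem_univ i₀, hpos i₀⟩
    rw [hsum2] at this
    simp at this
  obtain ⟨f, a, hf, hfI, hfIc⟩ := hsep I hIne hIneq
  -- apply f to the dependence
  have hfsum : ∑ i, c i * f (x i) = 0 := by
    have := congrArg f hsum1
    simpa [map_sum] using this
  have hsplit : ∑ i ∈ I, c i * f (x i) + ∑ i ∈ Iᶜ, c i * f (x i) = 0 := by
    rw [Finset.sum_add_sum_compl]
    exact hfsum
  have hsplit2 : ∑ i ∈ I, c i * a + ∑ i ∈ Iᶜ, c i * a = 0 := by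
    rw [Finset.sum_add_sum_compl, ← Finset.sum_mul, hsum2, zero_mul]
  have h1 : ∑ i ∈ I, c i * f (x i) < ∑ i ∈ I, c i * a := by
    apply Finset.sum_lt_sum_of_nonempty hIne
    intro i hi
    have hci : 0 < c i := by simpa [hIdef] using hi
    exact mul_lt_mul_of_pos_left (hfI i hi (x i) (hxC i)) hci
  have h2 : ∑ i ∈ Iᶜ, c i * f (x i) ≤ ∑ i ∈ Iᶜ, c i * a := by
    apply Finset.sum_le_sum
    intro i hi
    have hci : c i ≤ 0 := by
      have := Finset.mem_compl.mp hi
      simpa [hIdef, not_lt] using this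
    have hia : a < f (x i) := hfIc i (Finset.mem_compl.mp hi) (x i) (hxC i)
    nlinarith
  linarith
end

section
/- Let V₁, V₂, V₃, V₄ be finite point sets in ℝ³ such that for every partition of {1,2,3,4} into two nonempty parts I and its complement, the unions ⋃_{i∈I} conv(V_i) and ⋃_{j∉I} conv(V_j) are strictly separated by a plane. Then any four points v₁ ∈ V₁, v₂ ∈ V₂, v₃ ∈ V₃, v₄ ∈ V₄ are affinely independent (i.e., not coplanar). -/
/-- if the convex hulls of four finite point sets in ℝ³ admit all the
strict plane separations between complementary nonempty subfamilies, then every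
transversal choice of four points is affinely independent (not coplanar). -/
theorem transversal_points_affinely_independent (V : Fin 4 → Finset (Fin 3 → ℝ))
    (hsep : ∀ I : Finset (Fin 4), I.Nonempty → I ≠ Finset.univ →
      ∃ (f : (Fin 3 → ℝ) →ₗ[ℝ] ℝ) (a : ℝ), f ≠ 0 ∧
        (∀ i ∈ I, ∀ x ∈ convexHull ℝ (V i : Set (Fin 3 → ℝ)), f x < a) ∧
        (∀ j ∉ I, ∀ x ∈ convexHull ℝ (V j : Set (Fin 3 → ℝ)), a < f x)) :
    ∀ v : Fin 4 → (Fin 3 → ℝ), (∀ i, v i ∈ V i) → AffineIndependent ℝ v := by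
  intro v hv
  rw [affineIndependent_iff_of_fintype]
  intro w hw0 hv0
  by_contra hne
  push_neg at hne
  obtain ⟨i0, hi0⟩ := hne
  -- there is a positive weight
  have hpos : ∃ i, 0 < w i := by
    by_contra h
    push_neg at h
    have := (Finset.sum_eq_zero_iff_of_nonpos (fun i _ => h i)).1 hw0
    exact hi0 (this i0 (Finset.mem_univ i0))
  have hneg : ∃ j, w j < 0 := by
    by_contra h
    push_neg at h
    have := (Finset.sum_eq_zero_iff_of_nonneg (fun i _ => h i)).1 hw0
    exact hi0 (this i0 (Finset.mem_univ i0))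
  obtain ⟨ip, hip⟩ := hpos
  obtain ⟨jn, hjn⟩ := hneg
  set I : Finset (Fin 4) := Finset.univ.filter (fun i => 0 < w i) with hI
  have hjnI : jn ∉ I := by
    simp [hI]
    linarith
  have hIne : I.Nonempty := ⟨ip, by simp [hI, hip]⟩
  have hIneq : I ≠ Finset.univ := fun h => hjnI (h ▸ Finset.mem_univ jn)
  obtain ⟨f, a, _, hlt, hgt⟩ := hsep I hIne hIneq
  have hmemhull : ∀ i, v i ∈ convexHull ℝ (V i : Set (Fin 3 → ℝ)) :=
    fun i => subset_convexHull ℝ _ (hv i)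
  -- split the sums
  have hsplit : ∑ i ∈ I, w i + ∑ i ∈ Finset.univ.filter (fun i => ¬ 0 < w i), w i = 0 := by
    rw [hI, Finset.sum_filter_add_sum_filter_not]; exact hw0
  have hsplitv : ∑ i ∈ I, w i • v i + ∑ i ∈ Finset.univ.filter (fun i => ¬ 0 < w i), w i • v i = 0 := by
    rw [hI, Finset.sum_filter_add_sum_filter_not]
    rw [Finset.weightedVSub_apply] at hv0
    simp only [vsub_eq_sub, smul_sub] at hv0
    rw [Finset.sum_sub_distrib, ← Finset.sum_smul, hw0, zero_smul, sub_zero] at hv0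
    exact hv0
  set J := Finset.univ.filter (fun i => ¬ 0 < w i) with hJ
  have hfq : f (∑ i ∈ I, w i • v i) = ∑ i ∈ I, w i * f (v i) := by
    rw [map_sum]; simp [smul_eq_mul]
  have hfq' : f (∑ i ∈ I, w i • v i) = ∑ j ∈ J, (-w j) * f (v j) := by
    have : ∑ i ∈ I, w i • v i = -∑ j ∈ J, w j • v j := by
      rw [eq_neg_iff_add_eq_zero]; exact hsplitv
    rw [this, map_neg, map_sum, ← Finset.sum_neg_distrib]
    exact Finset.sum_congr rfl fun j _ => by simp [smul_eq_mul]
  -- upper bound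
  have h1 : ∑ i ∈ I, w i * f (v i) < ∑ i ∈ I, w i * a := by
    apply Finset.sum_lt_sum_of_nonempty hIne
    intro i hi
    have hwi : 0 < w i := (Finset.mem_filter.1 hi).2
    exact mul_lt_mul_of_pos_left (hlt i hi (v i) (hmemhull i)) hwi
  -- lower bound
  have h2 : ∑ j ∈ J, (-w j) * a < ∑ j ∈ J, (-w j) * f (v j) := by
    apply Finset.sum_lt_sum
    · intro j hj
      have hwj : ¬ 0 < w j := (Finset.mem_filter.1 hj).2
      have : a < f (v j) := hgt j (by simp [hI]; linarith [not_lt.1 hwj]) (v j) (hmemhull j)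
      exact mul_le_mul_of_nonneg_left this.le (by linarith [not_lt.1 hwj])
    · refine ⟨jn, by simp [hJ]; linarith, ?_⟩
      have : a < f (v jn) := hgt jn hjnI (v jn) (hmemhull jn)
      exact mul_lt_mul_of_pos_left this (by linarith)
  have hsa : ∑ i ∈ I, w i * a = ∑ j ∈ J, (-w j) * a := by
    rw [← Finset.sum_mul, ← Finset.sum_mul]
    congr 1
    have : ∑ j ∈ J, w j = -∑ i ∈ I, w i := by linarith
    rw [Finset.sum_neg_distrib, this, neg_neg]
  linarith [hfq ▸ h1, hfq' ▸ h2]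
end

section
/- Let m, n be positive integers with n^{1/2} ≤ m ≤ n^{3/2}, and define L to be the set of lines in ℝ³ of the form {y = ax + b, z = cx + d} with integers 1 ≤ a,c ≤ n^{3/8}/m^{1/4} and 1 ≤ b,d ≤ m^{1/4}n^{1/8}. Then any plane in ℝ³ contains at most √n lines of L. -/
open scoped Classical

/-- A plane (affine 2-dimensional subspace) in ℝ³. -/
def IsPlane3 (π : Set (Fin 3 → ℝ)) : Prop :=
  ∃ (f : (Fin 3 → ℝ) →ₗ[ℝ] ℝ) (a : ℝ), f ≠ 0 ∧ π = {x | f x = a}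

/-- The line `{y = a x + b, z = c x + d}` in ℝ³. -/
def paramLine (a b c d : ℕ) : Set (Fin 3 → ℝ) :=
  {x | x 1 = (a : ℝ) * x 0 + (b : ℝ) ∧ x 2 = (c : ℝ) * x 0 + (d : ℝ)}

/-- The line family with slopes in `[1,A]` and intercepts in `[1,B]`. -/
noncomputable def paramLines (A B : ℕ) : Finset (Set (Fin 3 → ℝ)) :=
  ((Finset.Icc 1 A ×ˢ Finset.Icc 1 B) ×ˢ (Finset.Icc 1 A ×ˢ Finset.Icc 1 B)).image
    fun q => paramLine q.1.1 q.1.2 q.2.1 q.2.2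

lemma key_constraints (f : (Fin 3 → ℝ) →ₗ[ℝ] ℝ) (α : ℝ) (a b c d : ℕ)
    (h : paramLine a b c d ⊆ {x | f x = α}) :
    (b:ℝ) * f (fun j => if (1:Fin 3) = j then 1 else 0) + (d:ℝ) * f (fun j => if (2:Fin 3) = j then 1 else 0) = α ∧
    f (fun j => if (0:Fin 3) = j then 1 else 0) + (a:ℝ) * f (fun j => if (1:Fin 3) = j then 1 else 0) + (c:ℝ) * f (fun j => if (2:Fin 3) = j then 1 else 0) = 0 := by
  have hfx : ∀ x : Fin 3 → ℝ, f x = x 0 * f (fun j => if (0:Fin 3) = j then 1 else 0)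
      + x 1 * f (fun j => if (1:Fin 3) = j then 1 else 0) + x 2 * f (fun j => if (2:Fin 3) = j then 1 else 0) := by
    intro x
    rw [LinearMap.pi_apply_eq_sum_univ f x, Fin.sum_univ_three]
    simp [smul_eq_mul]
  have h0 := h (show (![0, b, d] : Fin 3 → ℝ) ∈ paramLine a b c d by
    simp only [paramLine, Set.mem_setOf_eq, Matrix.cons_val_zero, Matrix.cons_val_one,
      Matrix.head_cons, Matrix.cons_val_two, Matrix.tail_cons]
    constructor <;> ring)
  have h1 := h (show (![1, (a:ℝ)+b, (c:ℝ)+d] : Fin 3 → ℝ) ∈ paramLine a b c d by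
    simp only [paramLine, Set.mem_setOf_eq, Matrix.cons_val_zero, Matrix.cons_val_one,
      Matrix.head_cons, Matrix.cons_val_two, Matrix.tail_cons]
    constructor <;> ring)
  simp only [Set.mem_setOf_eq] at h0 h1
  rw [hfx] at h0 h1
  simp only [Matrix.cons_val_zero, Matrix.cons_val_one, Matrix.head_cons,
    Matrix.cons_val_two, Matrix.tail_cons] at h0 h1
  constructor
  · linarith
  · linarith

lemma zero_of_basis_zero (f : (Fin 3 → ℝ) →ₗ[ℝ] ℝ)
    (h0 : f (fun j => if (0:Fin 3) = j then 1 else 0) = 0)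
    (h1 : f (fun j => if (1:Fin 3) = j then 1 else 0) = 0)
    (h2 : f (fun j => if (2:Fin 3) = j then 1 else 0) = 0) : f = 0 := by
  apply LinearMap.ext
  intro x
  rw [LinearMap.pi_apply_eq_sum_univ f x, Fin.sum_univ_three, h0, h1, h2]
  simp

/-- with `A = n^{3/8}/m^{1/4}` and `B = m^{1/4} n^{1/8}` integers and
`n^{1/2} ≤ m ≤ n^{3/2}`, every plane contains at most `√n` lines of the family. -/
theorem plane_contains_few_lines (m n A B : ℕ) (hm : 1 ≤ m) (hn : 1 ≤ n)
    (hmn₁ : (n : ℝ) ^ ((1 : ℝ) / 2) ≤ (m : ℝ))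
    (hmn₂ : (m : ℝ) ≤ (n : ℝ) ^ ((3 : ℝ) / 2))
    (hA : (A : ℝ) = (n : ℝ) ^ ((3 : ℝ) / 8) / (m : ℝ) ^ ((1 : ℝ) / 4))
    (hB : (B : ℝ) = (m : ℝ) ^ ((1 : ℝ) / 4) * (n : ℝ) ^ ((1 : ℝ) / 8)) :
    ∀ π : Set (Fin 3 → ℝ), IsPlane3 π →
      (((paramLines A B).filter fun l => l ⊆ π).card : ℝ) ≤ Real.sqrt n := by
  intro π hπ
  obtain ⟨f, α, hf, rfl⟩ := hπ
  set p := f (fun j => if (0:Fin 3) = j then 1 else 0) with hp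
  set q := f (fun j => if (1:Fin 3) = j then 1 else 0) with hq
  set r := f (fun j => if (2:Fin 3) = j then 1 else 0) with hr
  -- √n = A * B
  have hm0 : (0:ℝ) < (m:ℝ) := by exact_mod_cast hm
  have hn0 : (0:ℝ) < (n:ℝ) := by exact_mod_cast hn
  have hmy : (m:ℝ) ^ ((1:ℝ)/4) ≠ 0 := by positivity
  have hsqrt : Real.sqrt n = (A:ℝ) * (B:ℝ) := by
    rw [hA, hB, Real.sqrt_eq_rpow]
    rw [div_mul_eq_mul_div, ← mul_assoc, mul_comm ((n:ℝ) ^ ((3:ℝ)/8)) _,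
      mul_assoc, mul_div_assoc]
    rw [mul_div_assoc', mul_comm ((m:ℝ) ^ ((1:ℝ)/4)) _, mul_div_assoc,
      div_self hmy, mul_one, ← Real.rpow_add hn0]
    norm_num
  rw [hsqrt]
  -- reduce to counting parameter tuples
  set T := ((Finset.Icc 1 A ×ˢ Finset.Icc 1 B) ×ˢ (Finset.Icc 1 A ×ˢ Finset.Icc 1 B)).filter
    (fun t => paramLine t.1.1 t.1.2 t.2.1 t.2.2 ⊆ {x | f x = α}) with hT
  have hcard1 : ((paramLines A B).filter fun l => l ⊆ {x | f x = α}).card ≤ T.card := by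
    rw [paramLines, Finset.filter_image]
    exact Finset.card_image_le
  have hkey : ∀ t ∈ T, (t.1.2:ℝ) * q + (t.2.2:ℝ) * r = α ∧ p + (t.1.1:ℝ) * q + (t.2.1:ℝ) * r = 0 := by
    intro t ht
    rw [hT, Finset.mem_filter] at ht
    exact key_constraints f α t.1.1 t.1.2 t.2.1 t.2.2 ht.2
  have hcard2 : T.card ≤ A * B := by
    by_cases hq0 : q = 0 ∧ r = 0
    · -- then T must be empty
      have : T = ∅ := by
        rw [Finset.eq_empty_iff_forall_notMem]
        intro t ht
        have h := hkey t ht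
        apply hf
        apply zero_of_basis_zero f _ hq0.1 hq0.2
        have := h.2
        rw [hq0.1, hq0.2] at this
        rw [← hp]
        linarith
      simp [this]
    · push_neg at hq0
      by_cases hr0 : r = 0
      · have hqne : q ≠ 0 := fun h => hq0 h hr0
        -- a, b determined by q a = -p, q b = α; inject on second component
        have hmaps : ∀ t ∈ T, (fun t : (ℕ×ℕ)×(ℕ×ℕ) => t.2) t ∈ Finset.Icc 1 A ×ˢ Finset.Icc 1 B := by
          intro t ht
          rw [hT, Finset.mem_filter, Finset.mem_product] at ht
          exact ht.1.2
        have hinj : Set.InjOn (fun t : (ℕ×ℕ)×(ℕ×ℕ) => t.2) ↑T := by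
          intro t ht t' ht' heq
          rw [Finset.mem_coe] at ht ht'
          have h1 := hkey t ht
          have h2 := hkey t' ht'
          simp only at heq
          have k1 := h1.2; have k2 := h2.2
          rw [hr0, mul_zero] at k1 k2
          have l1 := h1.1; have l2 := h2.1
          rw [hr0, mul_zero] at l1 l2
          have e1 : (t.1.1:ℝ) = (t'.1.1:ℝ) :=
            mul_right_cancel₀ hqne (by linarith)
          have e2 : (t.1.2:ℝ) = (t'.1.2:ℝ) :=
            mul_right_cancel₀ hqne (by linarith)
          exact Prod.ext (Prod.ext (Nat.cast_injective e1) (Nat.cast_injective e2)) heq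
        calc T.card ≤ (Finset.Icc 1 A ×ˢ Finset.Icc 1 B).card :=
              Finset.card_le_card_of_injOn _ hmaps hinj
          _ = A * B := by simp [Finset.card_product, Nat.card_Icc]
      · -- r ≠ 0: c, d determined by a, b; inject on first component
        have hmaps : ∀ t ∈ T, (fun t : (ℕ×ℕ)×(ℕ×ℕ) => t.1) t ∈ Finset.Icc 1 A ×ˢ Finset.Icc 1 B := by
          intro t ht
          rw [hT, Finset.mem_filter, Finset.mem_product] at ht
          exact ht.1.1
        have hinj : Set.InjOn (fun t : (ℕ×ℕ)×(ℕ×ℕ) => t.1) ↑T := by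
          intro t ht t' ht' heq
          rw [Finset.mem_coe] at ht ht'
          have h1 := hkey t ht
          have h2 := hkey t' ht'
          simp only at heq
          have k1 := h1.2; have k2 := h2.2
          rw [← heq] at k2
          have l1 := h1.1; have l2 := h2.1
          rw [← heq] at l2
          have e1 : (t.2.1:ℝ) = (t'.2.1:ℝ) :=
            mul_right_cancel₀ hr0 (by linarith)
          have e2 : (t.2.2:ℝ) = (t'.2.2:ℝ) :=
            mul_right_cancel₀ hr0 (by linarith)
          exact Prod.ext heq (Prod.ext (Nat.cast_injective e1) (Nat.cast_injective e2))
        calc T.card ≤ (Finset.Icc 1 A ×ˢ Finset.Icc 1 B).card :=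
              Finset.card_le_card_of_injOn _ hmaps hinj
          _ = A * B := by simp [Finset.card_product, Nat.card_Icc]
  have : (((paramLines A B).filter fun l => l ⊆ {x | f x = α}).card : ℝ) ≤ ((A*B : ℕ) : ℝ) := by
    exact_mod_cast le_trans hcard1 hcard2
  simpa using this
end
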